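/- (Theorem 2.4: corner stencil for an impedance and a Neumann boundary condition.) Let κ ≥ 0 and let i denote the imaginary unit. For h > 0 define the complex 4-point corner stencil coefficients C_{1,1} := 1 − (15·(112+219i)/2^13 − 16i/15)(κh) + ((961−419i)/2^12 − 16/45)(κh)² + ((721+282i)/2^15)(κh)³ − ((181+51i)/2^15)(κh)⁴; C_{0,1} := 2 − (15·(112+219i)/2^12 − 29i/15)(κh) + (3187/2^13 − 5·67i/2^11 − 11/18)(κh)² + ((1059+4899i)/2^15 − 17i/90)(κh)³ + ((507+606i)/2^15)(κh)⁴; C_{1,0} := 2 − (15·(112+219i)/2^12 − 29i/15)(κh) + (3187/2^13 − 5·67i/2^11 − 49/90)(κh)² + (3·1341i/2^15 − i/10 + 611/2^15)(κh)³ + ((−208+105i)/2^15)(κh)⁴; C_{0,0} := −5 + (75·(112+219i)/2^13 − 29i/15)(κh) + ((1559−1522i)/2^13 + 1/90)(κh)² − (3759/2^15 + 4239i/2^14 − 7i/18)(κh)³ − ((775+324i)/2^15 − 1/40)(κh)⁴. Then there exist functions J_{m,n}, J_{g₁,n}, J_{g₃,n} : (0,∞) → ℂ (depending only on κ, not on the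 data below) such that: for every corner point (l₁,l₃) ∈ ℝ², every function u : ℝ² → ℂ which is 8-times continuously differentiable on an open neighborhood U of (l₁,l₃), with f := Δu + κ²u on U, and every pair of 7-times continuously differentiable functions g₁, g₃ : ℝ → ℂ satisfying −∂_x u(l₁,y) − iκ·u(l₁,y) = g₁(y) for y near l₃ and −∂_y u(x,l₃) = g₃(x) for x near l₁, one has h^{−1} Σ_{k=0}^{1} Σ_{ℓ=0}^{1} C_{k,ℓ} · u(l₁+kh, l₃+ℓh) − Σ_{(m,n)∈Λ_6} f^{(m,n)} · J_{m,n}(h) − Σ_{n=0}^{7} g₁^{(n)}(l₃) · J_{g₁,n}(h) − Σ_{n=0}^{7} g₃^{(n)}(l₁) · J_{g₃,n}(h) = O(h^6) as h → 0+, where derivatives of f are evaluated at (l₁,l₃). That is, the 4-point corner scheme achieves sixth consistency order. -/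

import Mathlib

open scoped BigOperators
open Complex

/-- The index set `Λ_N = {(m,n) ∈ ℕ×ℕ : m+n ≤ N}`. -/
def Lam (N : ℕ) : Finset (ℕ × ℕ) :=
  (Finset.range (N + 1) ×ˢ Finset.range (N + 1)).filter (fun p => p.1 + p.2 ≤ N)

/-- `Λ_N^1 = {(m,n) ∈ Λ_N : m ≤ 1}`. -/
def Lam1 (N : ℕ) : Finset (ℕ × ℕ) := (Lam N).filter (fun p => p.1 ≤ 1)

/-- `Λ_N^2 = Λ_N \ Λ_N^1 = {(m,n) ∈ Λ_N : m ≥ 2}`. -/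
def Lam2 (N : ℕ) : Finset (ℕ × ℕ) := (Lam N).filter (fun p => 2 ≤ p.1)

/-- Mixed partial derivative `u^{(m,n)} = ∂^{m+n} u / ∂x^m ∂y^n` at `(x,y)`. -/
noncomputable def pd (u : ℝ × ℝ → ℂ) (m n : ℕ) (x y : ℝ) : ℂ :=
  iteratedDeriv m (fun s => iteratedDeriv n (fun t => u (s, t)) y) x

/-- `f = Δu + κ² u`. -/
noncomputable def helm (κ : ℝ) (u : ℝ × ℝ → ℂ) : ℝ × ℝ → ℂ :=
  fun p => pd u 2 0 p.1 p.2 + pd u 0 2 p.1 p.2 + (κ : ℂ) ^ 2 * u p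

/-- The polynomial `G_{N,m,n}(x,y)`; the sum is empty (0) when `m+n > N`. -/
noncomputable def Gpoly (κ : ℝ) (N m n : ℕ) (x y : ℂ) : ℂ :=
  if m + n ≤ N then
    ∑ p ∈ Finset.range ((N - m - n) / 2 + 1),
      ∑ ℓ ∈ Finset.Icc p (p + n / 2),
        (-1 : ℂ) ^ ℓ * (Nat.choose ℓ p : ℂ) * (κ : ℂ) ^ (2 * p) *
          x ^ (m + 2 * ℓ) * y ^ (n + 2 * p - 2 * ℓ) /
          ((Nat.factorial (m + 2 * ℓ) : ℂ) * (Nat.factorial (n + 2 * p - 2 * ℓ) : ℂ))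
  else 0

/-- The polynomial `H_{N,m,n}(x,y)`; the sum is empty (0) when `m+n+2 > N`. -/
noncomputable def Hpoly (κ : ℝ) (N m n : ℕ) (x y : ℂ) : ℂ :=
  if m + n + 2 ≤ N then
    ∑ p ∈ Finset.range ((N - 2 - m - n) / 2 + 1),
      ∑ ℓ ∈ Finset.Icc (p + 1) (p + n / 2 + 1),
        (-1 : ℂ) ^ (ℓ - 1) * (Nat.choose (ℓ - 1) p : ℂ) * (κ : ℂ) ^ (2 * p) *
          x ^ (m + 2 * ℓ) * y ^ (2 * p + n + 2 - 2 * ℓ) /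
          ((Nat.factorial (m + 2 * ℓ) : ℂ) * (Nat.factorial (2 * p + n + 2 - 2 * ℓ) : ℂ))
  else 0

/-- Corner stencil coefficient `C_{1,1}` of Theorem 2.4, a polynomial in `t = κh`. -/
noncomputable def cor1C11 (t : ℝ) : ℂ :=
  1 - (15 * (112 + 219*I)/2^13 - 16*I/15) * (t : ℂ)
    + ((961 - 419*I)/2^12 - 16/45) * (t : ℂ)^2
    + ((721 + 282*I)/2^15) * (t : ℂ)^3
    - ((181 + 51*I)/2^15) * (t : ℂ)^4

/-- Corner stencil coefficient `C_{0,1}` of Theorem 2.4, a polynomial in `t = κh`. -/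
noncomputable def cor1C01 (t : ℝ) : ℂ :=
  2 - (15 * (112 + 219*I)/2^12 - 29*I/15) * (t : ℂ)
    + (3187/2^13 - 5 * 67*I/2^11 - 11/18) * (t : ℂ)^2
    + ((1059 + 4899*I)/2^15 - 17*I/90) * (t : ℂ)^3
    + ((507 + 606*I)/2^15) * (t : ℂ)^4

/-- Corner stencil coefficient `C_{1,0}` of Theorem 2.4, a polynomial in `t = κh`. -/
noncomputable def cor1C10 (t : ℝ) : ℂ :=
  2 - (15 * (112 + 219*I)/2^12 - 29*I/15) * (t : ℂ)
    + (3187/2^13 - 5 * 67*I/2^11 - 49/90) * (t : ℂ)^2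
    + (3 * 1341*I/2^15 - I/10 + 611/2^15) * (t : ℂ)^3
    + ((-208 + 105*I)/2^15) * (t : ℂ)^4

/-- Corner stencil coefficient `C_{0,0}` of Theorem 2.4, a polynomial in `t = κh`. -/
noncomputable def cor1C00 (t : ℝ) : ℂ :=
  -5 + (75 * (112 + 219*I)/2^13 - 29*I/15) * (t : ℂ)
    + ((1559 - 1522*I)/2^13 + 1/90) * (t : ℂ)^2
    - (3759/2^15 + 4239*I/2^14 - 7*I/18) * (t : ℂ)^3
    - ((775 + 324*I)/2^15 - 1/40) * (t : ℂ)^4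

/-- The 4-point corner stencil coefficient `C_{k,ℓ}` of Theorem 2.4, for
`k,ℓ ∈ {0,1}`. -/
noncomputable def cor1Coef (t : ℝ) (k ℓ : ℕ) : ℂ :=
  if k = 0 then (if ℓ = 0 then cor1C00 t else cor1C01 t)
  else (if ℓ = 0 then cor1C10 t else cor1C11 t)

/-!
Expand `u` around the corner in its bivariate Taylor polynomial of order 7; the stencil applied to
the error is `O(h⁸)`, hence `O(h⁷)` after division by `h`. The Taylor coefficients `u^{(m,n)}`,
`m + n ≤ 7`, are not independent: the equation `Δu + κ²u = f` and the two boundary conditions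
express all of them through `f^{(m,n)}`, `g₁^{(n)}`, `g₃^{(n)}` and the four values
`u^{(0,2j)}`, `j ≤ 3`. After this reduction the stencil applied to the Taylor polynomial is `h`
times the `J`-terms plus `h⁷` times a combination of the `u^{(0,2j)}`, which is `O(h⁶)` after
division by `h`: the stencil coefficients are chosen exactly so that the lower powers of `h` in
front of the `u^{(0,2j)}` cancel.
-/

open Set Filter Topology
open scoped Nat

section DirectionalDerivative

variable {E : Type*} [NormedAddCommGroup E] [NormedSpace ℝ E] {U : Set E} {v v' : E}
  {w w₁ w₂ : E → ℂ}

noncomputable def dirDeriv (v : E) (w : E → ℂ) : E → ℂ := fun p => lineDeriv ℝ w p v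

theorem dirDeriv_eq_fderiv {p : E} (hw : DifferentiableAt ℝ w p) :
    dirDeriv v w p = fderiv ℝ w p v :=
  hw.lineDeriv_eq_fderiv

theorem ContDiffOn.differentiableAt_of_isOpen {F : Type*} [NormedAddCommGroup F]
    [NormedSpace ℝ F] {f : E → F} {N : WithTop ℕ∞} (hf : ContDiffOn ℝ N f U) (hU : IsOpen U)
    (hN : N ≠ 0) {p : E} (hp : p ∈ U) : DifferentiableAt ℝ f p :=
  (hf.contDiffAt (hU.mem_nhds hp)).differentiableAt hN

theorem ContDiffOn.dirDeriv_of_isOpen (hU : IsOpen U) {N : ℕ} (hw : ContDiffOn ℝ (N + 1) w U) :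
    ContDiffOn ℝ N (dirDeriv v w) U :=
  ((hw.fderiv_of_isOpen hU (by norm_cast)).clm_apply contDiffOn_const).congr fun _ hp =>
    dirDeriv_eq_fderiv (hw.differentiableAt_of_isOpen hU (by simp) hp)

theorem ContDiffOn.iterate_dirDeriv_of_isOpen (hU : IsOpen U) {N : ℕ} (n : ℕ)
    (hw : ContDiffOn ℝ (N + n : ℕ) w U) : ContDiffOn ℝ N ((dirDeriv v)^[n] w) U := by
  induction n generalizing w with
  | zero => simpa using hw
  | succ n ih =>
    rw [Function.iterate_succ_apply]
    exact ih (ContDiffOn.dirDeriv_of_isOpen hU (by exact_mod_cast hw))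

theorem dirDeriv_congr (hU : IsOpen U) (h : EqOn w₁ w₂ U) :
    EqOn (dirDeriv v w₁) (dirDeriv v w₂) U := fun _ hp =>
  (eventuallyEq_of_mem (hU.mem_nhds hp) h).lineDeriv_eq

theorem iterate_dirDeriv_congr (hU : IsOpen U) (n : ℕ) (h : EqOn w₁ w₂ U) :
    EqOn ((dirDeriv v)^[n] w₁) ((dirDeriv v)^[n] w₂) U := by
  induction n generalizing w₁ w₂ with
  | zero => exact h
  | succ n ih => exact ih (dirDeriv_congr hU h)

theorem dirDeriv_add {p : E} (h₁ : DifferentiableAt ℝ w₁ p) (h₂ : DifferentiableAt ℝ w₂ p) :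
    dirDeriv v (fun q => w₁ q + w₂ q) p = dirDeriv v w₁ p + dirDeriv v w₂ p := by
  rw [dirDeriv_eq_fderiv h₁, dirDeriv_eq_fderiv h₂]
  exact ((h₁.hasFDerivAt.fun_add h₂.hasFDerivAt).hasLineDerivAt v).lineDeriv

theorem iterate_dirDeriv_add (hU : IsOpen U) (n : ℕ) (h₁ : ContDiffOn ℝ n w₁ U)
    (h₂ : ContDiffOn ℝ n w₂ U) :
    EqOn ((dirDeriv v)^[n] (fun q => w₁ q + w₂ q))
      (fun q => (dirDeriv v)^[n] w₁ q + (dirDeriv v)^[n] w₂ q) U := by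
  induction n generalizing w₁ w₂ with
  | zero => intro p _; rfl
  | succ n ih =>
    have hstep : EqOn (dirDeriv v (fun q => w₁ q + w₂ q))
        (fun q => dirDeriv v w₁ q + dirDeriv v w₂ q) U := fun p hp =>
      dirDeriv_add (h₁.differentiableAt_of_isOpen hU (by simp) hp)
        (h₂.differentiableAt_of_isOpen hU (by simp) hp)
    intro p hp
    simp only [Function.iterate_succ_apply]
    rw [iterate_dirDeriv_congr hU n hstep hp]
    exact ih (h₁.dirDeriv_of_isOpen hU) (h₂.dirDeriv_of_isOpen hU) hp

theorem dirDeriv_comm (hU : IsOpen U) (hw : ContDiffOn ℝ 2 w U) {p : E} (hp : p ∈ U) :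
    dirDeriv v (dirDeriv v' w) p = dirDeriv v' (dirDeriv v w) p := by
  have hdd : DifferentiableAt ℝ (fderiv ℝ w) p :=
    (hw.fderiv_of_isOpen (m := 1) hU (by norm_num)).differentiableAt_of_isOpen hU one_ne_zero hp
  have hsecond : ∀ v v' : E, dirDeriv v (dirDeriv v' w) p = fderiv ℝ (fderiv ℝ w) p v v' := by
    intro v v'
    have hev : dirDeriv v' w =ᶠ[𝓝 p] fun q => fderiv ℝ w q v' := by
      filter_upwards [hU.mem_nhds hp] with q hq
      exact dirDeriv_eq_fderiv (hw.differentiableAt_of_isOpen hU (by simp) hq)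
    calc dirDeriv v (dirDeriv v' w) p = lineDeriv ℝ (fun q => fderiv ℝ w q v') p v :=
          hev.lineDeriv_eq
      _ = fderiv ℝ (fun q => fderiv ℝ w q v') p v :=
          (hdd.clm_apply (differentiableAt_const v')).lineDeriv_eq_fderiv
      _ = fderiv ℝ (fderiv ℝ w) p v v' := by
          rw [fderiv_clm_apply hdd (differentiableAt_const v')]; simp
  rw [hsecond, hsecond]
  exact (hw.contDiffAt (hU.mem_nhds hp)).isSymmSndFDerivAt (by simp) v v'

theorem dirDeriv_iterate_dirDeriv_comm (hU : IsOpen U) (n : ℕ)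
    (hw : ContDiffOn ℝ (n + 1 : ℕ) w U) :
    EqOn (dirDeriv v ((dirDeriv v')^[n] w)) ((dirDeriv v')^[n] (dirDeriv v w)) U := by
  induction n generalizing w with
  | zero => intro p _; rfl
  | succ n ih =>
    intro p hp
    simp only [Function.iterate_succ_apply]
    rw [ih (hw.dirDeriv_of_isOpen hU) hp]
    refine iterate_dirDeriv_congr hU n (fun q hq => ?_) hp
    exact dirDeriv_comm hU (hw.of_le (by norm_cast; omega)) hq

theorem iterate_dirDeriv_comm (hU : IsOpen U) (m n : ℕ) (hw : ContDiffOn ℝ (m + n : ℕ) w U) :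
    EqOn ((dirDeriv v)^[m] ((dirDeriv v')^[n] w)) ((dirDeriv v')^[n] ((dirDeriv v)^[m] w)) U := by
  induction m generalizing w with
  | zero => intro p _; rfl
  | succ m ih =>
    intro p hp
    rw [Function.iterate_succ_apply,
      iterate_dirDeriv_congr hU m (dirDeriv_iterate_dirDeriv_comm hU n
        (hw.of_le (by norm_cast; omega))) hp,
      ih (ContDiffOn.dirDeriv_of_isOpen hU (by convert hw using 2; push_cast; ring)) hp,
      Function.iterate_succ_apply]

end DirectionalDerivative

local notation "∂₁" => dirDeriv ((1 : ℝ), (0 : ℝ))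
local notation "∂₂" => dirDeriv ((0 : ℝ), (1 : ℝ))

theorem dirDeriv_fst_apply (w : ℝ × ℝ → ℂ) (x y : ℝ) :
    ∂₁ w (x, y) = deriv (fun s => w (s, y)) x := by
  simpa [dirDeriv, lineDeriv, add_comm] using
    deriv_comp_const_add (f := fun s => w (s, y)) (a := x) (x := 0)

theorem dirDeriv_snd_apply (w : ℝ × ℝ → ℂ) (x y : ℝ) :
    ∂₂ w (x, y) = deriv (fun t => w (x, t)) y := by
  simpa [dirDeriv, lineDeriv, add_comm] using
    deriv_comp_const_add (f := fun t => w (x, t)) (a := y) (x := 0)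

theorem iterate_dirDeriv_fst_apply (w : ℝ × ℝ → ℂ) (m : ℕ) (x y : ℝ) :
    ∂₁^[m] w (x, y) = iteratedDeriv m (fun s => w (s, y)) x := by
  induction m generalizing x with
  | zero => rfl
  | succ m ih =>
    rw [Function.iterate_succ_apply', dirDeriv_fst_apply, iteratedDeriv_succ]
    simp only [ih]

theorem iterate_dirDeriv_snd_apply (w : ℝ × ℝ → ℂ) (n : ℕ) (x y : ℝ) :
    ∂₂^[n] w (x, y) = iteratedDeriv n (fun t => w (x, t)) y := by
  induction n generalizing y with
  | zero => rfl
  | succ n ih =>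
    rw [Function.iterate_succ_apply', dirDeriv_snd_apply, iteratedDeriv_succ]
    simp only [ih]

theorem pd_eq_iterate_dirDeriv (u : ℝ × ℝ → ℂ) (m n : ℕ) (x y : ℝ) :
    pd u m n x y = ∂₁^[m] (∂₂^[n] u) (x, y) := by
  simp only [pd, iterate_dirDeriv_fst_apply, iterate_dirDeriv_snd_apply]

section PartialDerivatives

variable {U : Set (ℝ × ℝ)} {w w₁ w₂ : ℝ × ℝ → ℂ} {x y : ℝ}

theorem pd_zero_left (n : ℕ) : pd w 0 n x y = iteratedDeriv n (fun t => w (x, t)) y := by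
  simp only [pd, iteratedDeriv_zero]

theorem pd_add (hU : IsOpen U) {m n : ℕ} (h₁ : ContDiffOn ℝ (m + n : ℕ) w₁ U)
    (h₂ : ContDiffOn ℝ (m + n : ℕ) w₂ U) (hp : (x, y) ∈ U) :
    pd (fun q => w₁ q + w₂ q) m n x y = pd w₁ m n x y + pd w₂ m n x y := by
  simp only [pd_eq_iterate_dirDeriv]
  rw [iterate_dirDeriv_congr hU m (iterate_dirDeriv_add hU n (h₁.of_le (by norm_cast; omega))
    (h₂.of_le (by norm_cast; omega))) hp]
  exact iterate_dirDeriv_add hU m (h₁.iterate_dirDeriv_of_isOpen hU n)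
    (h₂.iterate_dirDeriv_of_isOpen hU n) hp

theorem pd_const_mul (c : ℂ) (m n : ℕ) : pd (fun q => c * w q) m n x y = c * pd w m n x y := by
  simp only [pd, iteratedDeriv_const_mul_field]

theorem pd_neg (m n : ℕ) : pd (fun q => -w q) m n x y = -pd w m n x y := by
  simp only [pd, iteratedDeriv_fun_neg]

theorem pd_iterate_snd (k m n : ℕ) : pd (∂₂^[k] w) m n x y = pd w m (n + k) x y := by
  rw [pd_eq_iterate_dirDeriv, pd_eq_iterate_dirDeriv, Function.iterate_add_apply]

theorem pd_iterate_fst (hU : IsOpen U) {k n : ℕ} (hw : ContDiffOn ℝ (k + n : ℕ) w U)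
    (m : ℕ) (hp : (x, y) ∈ U) : pd (∂₁^[k] w) m n x y = pd w (m + k) n x y := by
  rw [pd_eq_iterate_dirDeriv, pd_eq_iterate_dirDeriv, Function.iterate_add_apply]
  exact iterate_dirDeriv_congr hU m (fun q hq => (iterate_dirDeriv_comm hU k n hw hq).symm) hp

end PartialDerivatives

section BoundaryRelations

variable {U : Set (ℝ × ℝ)} {u : ℝ × ℝ → ℂ} {N : ℕ} {x₀ y₀ : ℝ}

theorem pd_helm (κ : ℝ) (hU : IsOpen U) (hu : ContDiffOn ℝ N u U) {m n : ℕ} (hmn : m + n + 2 ≤ N)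
    (hp : (x₀, y₀) ∈ U) :
    pd (helm κ u) m n x₀ y₀
      = pd u (m + 2) n x₀ y₀ + pd u m (n + 2) x₀ y₀ + κ ^ 2 * pd u m n x₀ y₀ := by
  have hhelm : helm κ u = fun q => (∂₁^[2] u q + ∂₂^[2] u q) + (κ : ℂ) ^ 2 * u q := by
    funext q
    simp [helm, pd_eq_iterate_dirDeriv]
  have hxx : ContDiffOn ℝ (m + n : ℕ) (∂₁^[2] u) U :=
    ContDiffOn.iterate_dirDeriv_of_isOpen hU 2 (hu.of_le (by norm_cast))
  have hyy : ContDiffOn ℝ (m + n : ℕ) (∂₂^[2] u) U :=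
    ContDiffOn.iterate_dirDeriv_of_isOpen hU 2 (hu.of_le (by norm_cast))
  have hu' : ContDiffOn ℝ (m + n : ℕ) u U := hu.of_le (by norm_cast; omega)
  rw [hhelm, pd_add hU (hxx.add hyy) (contDiffOn_const.mul hu') hp, pd_add hU hxx hyy hp,
    pd_const_mul, pd_iterate_snd,
    pd_iterate_fst hU (hu.of_le (by norm_cast; omega) : ContDiffOn ℝ (2 + n : ℕ) u U) m hp]

theorem iteratedDeriv_eq_of_neumann {W : Set ℝ} (hW : IsOpen W) (hx₀ : x₀ ∈ W) {g : ℝ → ℂ}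
    (hbc : ∀ x ∈ W, -(pd u 0 1 x y₀) = g x) (n : ℕ) :
    iteratedDeriv n g x₀ = -pd u n 1 x₀ y₀ := by
  have hev : g =ᶠ[𝓝 x₀] fun x => -pd u 0 1 x y₀ := by
    filter_upwards [hW.mem_nhds hx₀] with x hx using (hbc x hx).symm
  rw [hev.iteratedDeriv_eq, iteratedDeriv_fun_neg]
  simp only [pd, iteratedDeriv_zero]

theorem iteratedDeriv_eq_of_impedance (hU : IsOpen U) (hu : ContDiffOn ℝ N u U)
    (hp : (x₀, y₀) ∈ U) {V : Set ℝ} (hV : IsOpen V) (hy₀ : y₀ ∈ V) {c : ℂ} {g : ℝ → ℂ}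
    (hbc : ∀ y ∈ V, -(pd u 1 0 x₀ y) - c * u (x₀, y) = g y) {n : ℕ} (hn : n + 1 ≤ N) :
    iteratedDeriv n g y₀ = -pd u 1 n x₀ y₀ - c * pd u 0 n x₀ y₀ := by
  have hev : g =ᶠ[𝓝 y₀] fun y => (fun q => -∂₁ u q + -c * u q) (x₀, y) := by
    filter_upwards [hV.mem_nhds hy₀] with y hy
    simp only [← hbc y hy, pd_eq_iterate_dirDeriv, Function.iterate_one, Function.iterate_zero,
      id_eq]
    ring
  have hx : ContDiffOn ℝ (0 + n : ℕ) (fun q => -∂₁ u q) U :=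
    (ContDiffOn.dirDeriv_of_isOpen hU (hu.of_le (by norm_cast; omega))).neg
  have hu' : ContDiffOn ℝ (0 + n : ℕ) (fun q => -c * u q) U :=
    contDiffOn_const.mul (hu.of_le (by norm_cast; omega))
  have hg : iteratedDeriv n g y₀ = pd (fun q => -∂₁ u q + -c * u q) 0 n x₀ y₀ := by
    rw [pd_zero_left]
    exact hev.iteratedDeriv_eq n
  have hxn : pd (∂₁ u) 0 n x₀ y₀ = pd u (0 + 1) n x₀ y₀ :=
    pd_iterate_fst hU (hu.of_le (by norm_cast; omega) : ContDiffOn ℝ (1 + n : ℕ) u U) 0 hp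
  rw [hg, pd_add hU hx hu' hp, pd_neg, pd_const_mul, hxn]
  ring

end BoundaryRelations

section Taylor

theorem norm_sub_taylor_le_of_isOpen {F : Type*} [NormedAddCommGroup F] [NormedSpace ℝ F]
    {O : Set ℝ} (hO : IsOpen O) {f : ℝ → F} {n : ℕ} {a b C x : ℝ} (hab : a < b)
    (hsub : Icc a b ⊆ O) (hf : ContDiffOn ℝ (n + 1) f O)
    (hC : ∀ y ∈ Icc a b, ‖iteratedDeriv (n + 1) f y‖ ≤ C) (hx : x ∈ Icc a b) :
    ‖f x - ∑ k ∈ Finset.range (n + 1), ((k ! : ℝ)⁻¹ * (x - a) ^ k) • iteratedDeriv k f a‖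
      ≤ C * (x - a) ^ (n + 1) / n ! := by
  have hwithin : ∀ k ≤ n + 1, ∀ y ∈ Icc a b,
      iteratedDerivWithin k f (Icc a b) y = iteratedDeriv k f y := fun k hk y hy =>
    iteratedDerivWithin_eq_iteratedDeriv (uniqueDiffOn_Icc hab)
      ((hf.contDiffAt (hO.mem_nhds (hsub hy))).of_le (by exact_mod_cast hk)) hy
  have h := taylor_mean_remainder_bound hab.le (hf.mono hsub) hx fun y hy =>
    (hwithin (n + 1) le_rfl y hy).symm ▸ hC y hy
  rwa [taylor_within_apply, Finset.sum_congr rfl fun k hk => by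
    rw [hwithin k (Nat.le_succ_of_le (Finset.mem_range_succ_iff.1 hk)) a
      (left_mem_Icc.2 hab.le)]] at h

variable {U : Set (ℝ × ℝ)} {w : ℝ × ℝ → ℂ} {n : ℕ} {C : ℝ}

theorem norm_sub_taylor_fst_le (hU : IsOpen U) (hw : ContDiffOn ℝ (n + 1) w U) {x₀ x₁ y : ℝ}
    (hx₀₁ : x₀ < x₁) (hseg : ∀ x ∈ Icc x₀ x₁, (x, y) ∈ U)
    (hC : ∀ x ∈ Icc x₀ x₁, ‖∂₁^[n + 1] w (x, y)‖ ≤ C) {x : ℝ} (hx : x ∈ Icc x₀ x₁) :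
    ‖w (x, y) - ∑ k ∈ Finset.range (n + 1), ((k ! : ℝ)⁻¹ * (x - x₀) ^ k) • ∂₁^[k] w (x₀, y)‖
      ≤ C * (x - x₀) ^ (n + 1) / n ! := by
  simp only [iterate_dirDeriv_fst_apply] at hC ⊢
  exact norm_sub_taylor_le_of_isOpen (hU.preimage (by fun_prop)) hx₀₁ hseg
    (hw.comp (contDiff_id.prodMk contDiff_const).contDiffOn fun _ hx => hx) hC hx

theorem norm_sub_taylor_snd_le (hU : IsOpen U) (hw : ContDiffOn ℝ (n + 1) w U) {x y₀ y₁ : ℝ}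
    (hy₀₁ : y₀ < y₁) (hseg : ∀ y ∈ Icc y₀ y₁, (x, y) ∈ U)
    (hC : ∀ y ∈ Icc y₀ y₁, ‖∂₂^[n + 1] w (x, y)‖ ≤ C) {y : ℝ} (hy : y ∈ Icc y₀ y₁) :
    ‖w (x, y) - ∑ k ∈ Finset.range (n + 1), ((k ! : ℝ)⁻¹ * (y - y₀) ^ k) • ∂₂^[k] w (x, y₀)‖
      ≤ C * (y - y₀) ^ (n + 1) / n ! := by
  simp only [iterate_dirDeriv_snd_apply] at hC ⊢
  exact norm_sub_taylor_le_of_isOpen (hU.preimage (by fun_prop)) hy₀₁ hseg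
    (hw.comp (contDiff_const.prodMk contDiff_id).contDiffOn fun _ hy => hy) hC hy

theorem exists_bound_iterate_dirDeriv {K : Set (ℝ × ℝ)} (hK : IsCompact K) (hU : IsOpen U)
    (hKU : K ⊆ U) {u : ℝ × ℝ → ℂ} {N : ℕ} (hu : ContDiffOn ℝ N u U) :
    ∃ M, 0 ≤ M ∧ ∀ n ≤ N, ∀ p ∈ K, ‖∂₁^[N - n] (∂₂^[n] u) p‖ ≤ M := by
  have hcont : ContinuousOn (fun p => ∑ n ∈ Finset.range (N + 1), ‖∂₁^[N - n] (∂₂^[n] u) p‖) K :=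
    continuousOn_finsetSum _ fun n hn =>
      ((ContDiffOn.iterate_dirDeriv_of_isOpen (N := 0) hU _ (ContDiffOn.iterate_dirDeriv_of_isOpen
        hU _ (hu.of_le (by simp at hn; norm_cast; omega)))).continuousOn.mono hKU).norm
  obtain ⟨M, hM⟩ := hK.exists_bound_of_continuousOn hcont
  refine ⟨max M 0, le_max_right _ _, fun n hn p hp => ?_⟩
  calc ‖∂₁^[N - n] (∂₂^[n] u) p‖
      ≤ ∑ n ∈ Finset.range (N + 1), ‖∂₁^[N - n] (∂₂^[n] u) p‖ :=
        Finset.single_le_sum (f := fun n => ‖∂₁^[N - n] (∂₂^[n] u) p‖) (fun _ _ => norm_nonneg _)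
          (Finset.mem_range_succ_iff.2 hn)
    _ ≤ M := (le_abs_self _).trans (hM p hp)
    _ ≤ max M 0 := le_max_left _ _

noncomputable def bivariateTaylor (N : ℕ) (D : ℕ → ℕ → ℂ) (a b : ℝ) : ℂ :=
  ∑ n ∈ Finset.range N, ((n ! : ℝ)⁻¹ * b ^ n) •
    ∑ m ∈ Finset.range (N - n), ((m ! : ℝ)⁻¹ * a ^ m) • D m n

theorem pow_mul_pow_le_max_pow {a b : ℝ} (ha : 0 ≤ a) (hb : 0 ≤ b) (k l : ℕ) :
    a ^ k * b ^ l ≤ max a b ^ (k + l) := by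
  rw [pow_add]
  exact mul_le_mul (pow_le_pow_left₀ ha (le_max_left a b) k)
    (pow_le_pow_left₀ hb (le_max_right a b) l) (by positivity) (by positivity)

theorem norm_smul_sub_taylor_fst_le (hU : IsOpen U) {u : ℝ × ℝ → ℂ} {n k : ℕ}
    (hu : ContDiffOn ℝ (n + k + 1 : ℕ) u U) {x₀ y₀ ρ M a b : ℝ} (hρ : 0 < ρ)
    (hseg : ∀ x ∈ Icc x₀ (x₀ + ρ), (x, y₀) ∈ U)
    (hM : ∀ x ∈ Icc x₀ (x₀ + ρ), ‖∂₁^[k + 1] (∂₂^[n] u) (x, y₀)‖ ≤ M) (ha : a ∈ Icc 0 ρ)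
    (hb : 0 ≤ b) :
    ‖((n ! : ℝ)⁻¹ * b ^ n) • (∂₂^[n] u (x₀ + a, y₀)
      - ∑ m ∈ Finset.range (k + 1), ((m ! : ℝ)⁻¹ * a ^ m) • pd u m n x₀ y₀)‖
        ≤ M * max a b ^ (n + k + 1) := by
  have ha0 : 0 ≤ a := ha.1
  have hM0 : 0 ≤ M := (norm_nonneg _).trans (hM x₀ (left_mem_Icc.2 (le_add_of_nonneg_right hρ.le)))
  have hw : ContDiffOn ℝ (k + 1 : ℕ) (∂₂^[n] u) U :=
    ContDiffOn.iterate_dirDeriv_of_isOpen hU n (hu.of_le (by norm_cast; omega))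
  have h := norm_sub_taylor_fst_le hU (by exact_mod_cast hw) (by linarith) hseg hM
    (x := x₀ + a) ⟨by linarith, by linarith [ha.2]⟩
  simp only [add_sub_cancel_left, ← pd_eq_iterate_dirDeriv] at h
  rw [norm_smul, Real.norm_of_nonneg (by positivity)]
  have hfact : ∀ k : ℕ, (1 : ℝ) ≤ k ! := fun k => by exact_mod_cast k.factorial_pos
  calc _ ≤ ((n ! : ℝ)⁻¹ * b ^ n) * (M * a ^ (k + 1) / k !) := by gcongr
    _ = M * (a ^ (k + 1) * b ^ n) * ((n ! : ℝ)⁻¹ * (k ! : ℝ)⁻¹) := by ring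
    _ ≤ M * max a b ^ (k + 1 + n) * 1 := by
      gcongr
      exacts [pow_mul_pow_le_max_pow ha0 hb _ _, mul_le_one₀ (inv_le_one_of_one_le₀ (hfact n))
        (by positivity) (inv_le_one_of_one_le₀ (hfact k))]
    _ = M * max a b ^ (n + k + 1) := by ring

theorem norm_sub_bivariateTaylor_le (hU : IsOpen U) {u : ℝ × ℝ → ℂ} {N : ℕ}
    (hu : ContDiffOn ℝ (N + 1) u U) {x₀ y₀ ρ : ℝ} (hρ : 0 < ρ)
    (hK : Icc x₀ (x₀ + ρ) ×ˢ Icc y₀ (y₀ + ρ) ⊆ U) :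
    ∃ C, 0 ≤ C ∧ ∀ a ∈ Icc 0 ρ, ∀ b ∈ Icc 0 ρ,
      ‖u (x₀ + a, y₀ + b) - bivariateTaylor (N + 1) (fun m n => pd u m n x₀ y₀) a b‖
        ≤ C * max a b ^ (N + 1) := by
  obtain ⟨M, hM0, hM⟩ := exists_bound_iterate_dirDeriv (isCompact_Icc.prod isCompact_Icc) hU hK
    (by exact_mod_cast hu)
  refine ⟨(N + 2) * M, by positivity, fun a ha b hb => ?_⟩
  have hb0 : 0 ≤ b := hb.1
  have hxa : x₀ + a ∈ Icc x₀ (x₀ + ρ) := ⟨by linarith [ha.1], by linarith [ha.2]⟩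
  have hy₀ : y₀ ∈ Icc y₀ (y₀ + ρ) := left_mem_Icc.2 (le_add_of_nonneg_right hρ.le)
  -- Taylor in `y` at `x₀ + a`, then each coefficient `∂₂ⁿ u (x₀ + a, y₀)` in `x` at `x₀`
  have hinner : ‖u (x₀ + a, y₀ + b)
      - ∑ n ∈ Finset.range (N + 1), ((n ! : ℝ)⁻¹ * b ^ n) • ∂₂^[n] u (x₀ + a, y₀)‖
        ≤ M * max a b ^ (N + 1) := by
    have h := norm_sub_taylor_snd_le hU hu (by linarith) (fun y hy => hK ⟨hxa, hy⟩)
      (fun y hy => by simpa using hM (N + 1) le_rfl _ ⟨hxa, hy⟩) (y := y₀ + b)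
      ⟨by linarith, by linarith [hb.2]⟩
    rw [add_sub_cancel_left] at h
    calc _ ≤ M * b ^ (N + 1) / N ! := h
      _ ≤ M * b ^ (N + 1) := div_le_self (by positivity) (by exact_mod_cast N.factorial_pos)
      _ ≤ M * max a b ^ (N + 1) := by gcongr; exact le_max_right a b
  have houter : ∀ n ∈ Finset.range (N + 1), ‖((n ! : ℝ)⁻¹ * b ^ n) • (∂₂^[n] u (x₀ + a, y₀)
      - ∑ m ∈ Finset.range (N + 1 - n), ((m ! : ℝ)⁻¹ * a ^ m) • pd u m n x₀ y₀)‖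
        ≤ M * max a b ^ (N + 1) := by
    intro n hn
    obtain ⟨k, rfl⟩ : ∃ k, N = n + k := ⟨N - n, by simp at hn; omega⟩
    have hk : n + k + 1 - n = k + 1 := by omega
    rw [hk]
    exact norm_smul_sub_taylor_fst_le hU (by exact_mod_cast hu) hρ (fun x hx => hK ⟨hx, hy₀⟩)
      (fun x hx => by simpa [hk] using hM n (by omega) _ ⟨hx, hy₀⟩) ha hb0
  calc _ = ‖(u (x₀ + a, y₀ + b)
          - ∑ n ∈ Finset.range (N + 1), ((n ! : ℝ)⁻¹ * b ^ n) • ∂₂^[n] u (x₀ + a, y₀))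
        + ∑ n ∈ Finset.range (N + 1), ((n ! : ℝ)⁻¹ * b ^ n) • (∂₂^[n] u (x₀ + a, y₀)
          - ∑ m ∈ Finset.range (N + 1 - n), ((m ! : ℝ)⁻¹ * a ^ m) • pd u m n x₀ y₀)‖ := by
        simp only [bivariateTaylor, smul_sub, Finset.sum_sub_distrib]
        abel_nf
    _ ≤ M * max a b ^ (N + 1) + ∑ n ∈ Finset.range (N + 1), M * max a b ^ (N + 1) :=
        (norm_add_le _ _).trans (add_le_add hinner ((norm_sum_le _ _).trans
          (Finset.sum_le_sum houter)))
    _ = (N + 2) * M * max a b ^ (N + 1) := by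
        simp only [Finset.sum_const, Finset.card_range, nsmul_eq_mul]
        push_cast
        ring

theorem IsOpen.exists_Icc_prod_Icc_subset (hU : IsOpen U) {x y : ℝ} (hp : (x, y) ∈ U) :
    ∃ ρ > 0, Icc x (x + ρ) ×ˢ Icc y (y + ρ) ⊆ U := by
  obtain ⟨ρ, hρ, hball⟩ := Metric.nhds_basis_closedBall.mem_iff.1 (hU.mem_nhds hp)
  refine ⟨ρ, hρ, Subset.trans ?_ hball⟩
  rw [← closedBall_prod_same, Real.closedBall_eq_Icc, Real.closedBall_eq_Icc]
  exact prod_mono (Icc_subset_Icc (by linarith) le_rfl) (Icc_subset_Icc (by linarith) le_rfl)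

end Taylor

section Stencil

noncomputable def horner (cs : List ℂ) (t : ℂ) : ℂ := cs.foldr (fun c s => c + t * s) 0

@[fun_prop]
theorem continuous_horner (cs : List ℂ) : Continuous (horner cs) := by
  induction cs with
  | nil => exact continuous_const
  | cons c cs ih => exact continuous_const.add (continuous_id.mul ih)

/- Coefficients, in powers of `t = κh`, of the functions `J` below and of the `O(h⁷)` remainder of
`stencil_bivariateTaylor_reduced`; they were computed by computer algebra from that identity. -/
noncomputable def jFCoeffs : ℕ → ℕ → List ℂ
  | 0, 0 => [3/2, -315/1024 + 14721/16384 * I, -21559/81920 - 1089/8192 * I,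
      753/16384 - 9697/163840 * I, 479/49152 + 195/16384 * I, -167/65536 + 4673/3932160 * I,
      2179/19660800 - 287/655360 * I, 37/655360 + 5141/117964800 * I,
      -389/23592960 + 3/1310720 * I]
  | 0, 1 => [1/2, -105/1024 + 4907/16384 * I, -60581/737280 - 363/8192 * I,
      697/49152 - 11117/552960 * I, 527633/103219200 + 1651/327680 * I,
      -113/196608 + 108473/176947200 * I, -46747/309657600 - 1779/9175040 * I,
      89/8257536 - 45383/7431782400 * I, 163/82575360 + 37/11010048 * I]
  | 0, 2 => [1/8, -105/4096 + 89989/983040 * I, -92071/2949120 - 475/32768 * I,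
      835/131072 - 94753/11796480 * I, 153167/176947200 + 919/983040 * I,
      -2717/7864320 - 2717/29491200 * I, 1937/23592960 + 97/2621440 * I]
  | 0, 3 => [1/40, -21/4096 + 4907/327680 * I, -356483/103219200 - 363/163840 * I,
      113/196608 - 108473/176947200 * I, 46747/309657600 + 1779/9175040 * I,
      -89/8257536 + 45383/7431782400 * I, -163/82575360 - 37/11010048 * I]
  | 0, 4 => [1/240, -7/8192 + 4907/1966080 * I, -3773/9830400 - 121/327680 * I,
      37/655360 + 5141/117964800 * I, -389/23592960 + 3/1310720 * I]
  | 0, 5 => [1/1680, -1/8192 + 701/1966080 * I, -42149/619315200 - 121/2293760 * I,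
      89/8257536 - 45383/7431782400 * I, 163/82575360 + 37/11010048 * I]
  | 1, 0 => [1/2, -105/1024 + 4907/16384 * I, -5821/81920 - 363/8192 * I,
      195/16384 - 479/49152 * I, 5273/5734400 + 51/20480 * I, -151/327680 + 623/6553600 * I,
      289/6553600 - 61/917504 * I, 37/4587520 + 5141/825753600 * I,
      -389/165150720 + 3/9175040 * I]
  | 1, 1 => [1/6, -35/1024 + 81797/737280 * I, -31507/1105920 - 419/24576 * I,
      1057/196608 - 60647/14745600 * I, 3857/44236800 + 583/983040 * I,
      -721/3932160 - 47/655360 * I, 181/3932160 + 17/1310720 * I]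
  | 1, 2 => [7/120, -49/4096 + 119431/2949120 * I, -3329243/309657600 - 3101/491520 * I,
      4139/1966080 - 94657/58982400 * I, 1163/35389440 + 61/344064 * I,
      -4159/55050240 - 151/6451200 * I, 3023/165150720 + 131/18350080 * I]
  | 1, 3 => [1/120, -7/4096 + 81797/14745600 * I, -22291/22118400 - 419/491520 * I,
      721/3932160 + 47/655360 * I, -181/3932160 - 17/1310720 * I]
  | 1, 4 => [17/5040, -17/24576 + 195139/88473600 * I, -103717/265420800 - 1391/4128768 * I,
      5713/82575360 + 24881/825753600 * I, -2923/165150720 - 11/2752512 * I]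
  | 2, 0 => [1/8, -105/4096 + 4907/65536 * I, -3083/196608 - 363/32768 * I,
      167/65536 - 4673/3932160 * I, -2179/19660800 + 287/655360 * I,
      -37/655360 - 5141/117964800 * I, 389/23592960 - 3/1310720 * I]
  | 2, 1 => [7/120, -49/4096 + 119431/2949120 * I, -3157211/309657600 - 3101/491520 * I,
      261/131072 - 192319/176947200 * I, -27161/154828800 + 1373/27525120 * I,
      -11581/165150720 - 44657/928972800 * I, 4453/165150720 + 727/55050240 * I]
  | 2, 2 => [1/60, -7/2048 + 16769/1474560 * I, -188953/88473600 - 433/245760 * I,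
      3161/7864320 + 16009/117964800 * I, -1163/11796480 - 91/2621440 * I]
  | 2, 3 => [1/280, -3/4096 + 35641/14745600 * I, -3599/8257536 - 257/688128 * I,
      13361/165150720 + 311873/7431782400 * I, -4127/165150720 - 271/27525120 * I]
  | 3, 0 => [1/40, -21/4096 + 4907/327680 * I, -99713/34406400 - 363/163840 * I,
      151/327680 - 623/6553600 * I, -289/6553600 + 61/917504 * I,
      -37/4587520 - 5141/825753600 * I, 389/165150720 - 3/9175040 * I]
  | 3, 1 => [7/360, -49/12288 + 572579/44236800 * I, -156037/66355200 - 2933/1474560 * I,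
      5047/11796480 + 329/1966080 * I, -1267/11796480 - 119/3932160 * I]
  | 3, 2 => [1/280, -3/4096 + 35641/14745600 * I, -39731/88473600 - 257/688128 * I,
      4603/55050240 + 24469/825753600 * I, -853/41287680 - 25/3670016 * I]
  | 4, 0 => [1/240, -7/8192 + 4907/1966080 * I, -3773/9830400 - 121/327680 * I,
      37/655360 + 5141/117964800 * I, -389/23592960 + 3/1310720 * I]
  | 4, 1 => [17/5040, -17/24576 + 195139/88473600 * I, -150119/371589120 - 1391/4128768 * I,
      1979/27525120 + 132277/7431782400 * I, -23/1720320 - 53/55050240 * I]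
  | 5, 0 => [1/1680, -1/8192 + 701/1966080 * I, -539/9830400 - 121/2293760 * I,
      37/4587520 + 5141/825753600 * I, -389/165150720 + 3/9175040 * I]
  | _, _ => []

noncomputable def jG1Coeffs : ℕ → List ℂ
  | 0 => [-3, 315/512 - 14721/8192 * I, 31799/40960 + 1089/4096 * I,
      -1173/8192 + 43929/163840 * I, -9697/163840 - 753/16384 * I, 195/16384 - 479/49152 * I,
      5273/5734400 + 51/20480 * I, -151/327680 + 623/6553600 * I, 289/6553600 - 61/917504 * I,
      37/4587520 + 5141/825753600 * I, -389/165150720 + 3/9175040 * I]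
  | 2 => [0, -1/30 * I, 35201/737280 + 7/1024 * I, -725/65536 + 78001/2949120 * I,
      -547319/77414400 - 2989/983040 * I, 3233/1966080 - 1781/1179648 * I,
      6809/88473600 + 305/2752512 * I, -743/11010048 - 4729/275251200 * I,
      439/27525120 + 137/18350080 * I]
  | 4 => [1/60, -7/2048 + 18817/1474560 * I, -724393/309657600 - 503/245760 * I,
      651/1310720 + 42857/176947200 * I, -33907/265420800 - 1565/16515072 * I,
      -1051/165150720 + 617/91750400 * I, 5/8257536 + 173/55050240 * I]
  | 6 => [1/504, -5/12288 + 56671/44236800 * I, -11827/53084160 - 2011/10321920 * I,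
      6379/165150720 + 15011/825753600 * I, -23/2293760 - 101/55050240 * I]
  | _ => []

noncomputable def jG3Coeffs : ℕ → List ℂ
  | 0 => [-3, 315/512 - 14721/8192 * I, 103589/122880 + 1089/4096 * I,
      -1285/8192 + 487013/1474560 * I, -16979/184320 - 2007/32768 * I,
      697/49152 - 11117/552960 * I, 527633/103219200 + 1651/327680 * I,
      -113/196608 + 108473/176947200 * I, -46747/309657600 - 1779/9175040 * I,
      89/8257536 - 45383/7431782400 * I, 163/82575360 + 37/11010048 * I]
  | 1 => [-1, 105/512 - 81797/122880 * I, 53011/184320 + 419/4096 * I,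
      -1841/32768 + 18863/184320 * I, -101593/4423680 - 1523/98304 * I,
      1057/196608 - 60647/14745600 * I, 3857/44236800 + 583/983040 * I,
      -721/3932160 - 47/655360 * I, 181/3932160 + 17/1310720 * I]
  | 2 => [0, -1/30 * I, 3001/81920 + 7/1024 * I, -1727/196608 + 142351/8847360 * I,
      -719087/309657600 - 121/245760 * I, 557/393216 - 41923/88473600 * I,
      -101069/309657600 - 991/6881280 * I, -1089/18350080 - 134213/2477260800 * I,
      531/18350080 + 19/1146880 * I]
  | 3 => [0, 0, 1/90, -7/3072 + 81797/11059200 * I, -22291/16588800 - 419/368640 * I,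
      721/2949120 + 47/491520 * I, -181/2949120 - 17/983040 * I]
  | 4 => [1/60, -7/2048 + 18817/1474560 * I, -552361/309657600 - 503/245760 * I,
      301/786432 + 134509/176947200 * I, -1297829/3715891200 - 9173/41287680 * I,
      293/165150720 - 74993/2477260800 * I, 449/33030144 + 337/27525120 * I]
  | 5 => [1/90, -7/3072 + 81797/11059200 * I, -22291/16588800 - 419/368640 * I,
      721/2949120 + 47/491520 * I, -181/2949120 - 17/983040 * I]
  | 6 => [1/504, -5/12288 + 56671/44236800 * I, -438521/1857945600 - 2011/10321920 * I,
      6827/165150720 + 43447/7431782400 * I, -941/165150720 + 11/9175040 * I]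
  | _ => []

noncomputable def remCoeffs : ℕ → List ℂ
  | 0 => [19/327680 - 37003/137625600 * I, -253/1228800 - 3/131072 * I,
      23/2293760 + 61/117964800 * I, 4237/412876800 + 53/9175040 * I,
      -3/9175040 - 389/165150720 * I]
  | 1 => [-1537/1966080 - 140017/619315200 * I, 23593/44236800 + 47/40960 * I,
      9811/55050240 + 44417/353894400 * I, -13331/275251200 - 2939/27525120 * I,
      -137/18350080 + 439/27525120 * I]
  | 2 => [-2371/1966080 + 1185839/619315200 * I, -1369/4423680 + 313/491520 * I,
      63383/165150720 - 16817/212336640 * I, -6637/91750400 - 377/8257536 * I,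
      -173/55050240 + 5/8257536 * I]
  | 3 => [1/504 * I, -60767/44236800 - 5/12288 * I, 2207/10321920 - 641/2073600 * I,
      1669/137625600 + 4943/82575360 * I, 101/55050240 - 23/2293760 * I]
  | _ => []

noncomputable def Jf (κ : ℝ) (m n : ℕ) (h : ℝ) : ℂ :=
  (h : ℂ) ^ (m + n + 1) * horner (jFCoeffs m n) (κ * h)

noncomputable def Jg1 (κ : ℝ) (n : ℕ) (h : ℝ) : ℂ := (h : ℂ) ^ n * horner (jG1Coeffs n) (κ * h)

noncomputable def Jg3 (κ : ℝ) (n : ℕ) (h : ℝ) : ℂ := (h : ℂ) ^ n * horner (jG3Coeffs n) (κ * h)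

/- With `B k = u^{(0,2k)}`, `F m n = f^{(m,n)}`, `G₁ n = g₁^{(n)}` and `G₃ m = g₃^{(m)}`,
`reduced κ B F G₁ G₃ m n` is the value of `u^{(m,n)}` forced by `Δu + κ²u = f` and the boundary
conditions; `reduceOdd` and `reduceEven` give it at `n = 2k + 1` and at `n = 2k`. Odd `n` are
lowered to `n = 1` (Neumann data); for even `n`, `m` is lowered to `m ≤ 1` (impedance data). -/
noncomputable def reduceOdd (κ : ℝ) (F : ℕ → ℕ → ℂ) (G₃ : ℕ → ℂ) : ℕ → ℕ → ℂ
  | m, 0 => -G₃ m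
  | m, k + 1 => F m (2 * k + 1) - reduceOdd κ F G₃ (m + 2) k - (κ : ℂ) ^ 2 * reduceOdd κ F G₃ m k

noncomputable def reduceEven (κ : ℝ) (B : ℕ → ℂ) (F : ℕ → ℕ → ℂ) (G₁ : ℕ → ℂ) : ℕ → ℕ → ℂ
  | 0, k => B k
  | 1, k => -I * κ * B k - G₁ (2 * k)
  | m + 2, k =>
    F m (2 * k) - reduceEven κ B F G₁ m (k + 1) - (κ : ℂ) ^ 2 * reduceEven κ B F G₁ m k

noncomputable def reduced (κ : ℝ) (B : ℕ → ℂ) (F : ℕ → ℕ → ℂ) (G₁ G₃ : ℕ → ℂ) (m n : ℕ) : ℂ :=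
  if n % 2 = 0 then reduceEven κ B F G₁ m (n / 2) else reduceOdd κ F G₃ m (n / 2)

theorem eq_reduced (κ : ℝ) {D F : ℕ → ℕ → ℂ} {G₁ G₃ : ℕ → ℂ} {N : ℕ}
    (hF : ∀ m n, m + n + 2 ≤ N → F m n = D (m + 2) n + D m (n + 2) + κ ^ 2 * D m n)
    (hG₁ : ∀ n, n + 1 ≤ N → G₁ n = -D 1 n - I * κ * D 0 n)
    (hG₃ : ∀ m, m + 1 ≤ N → G₃ m = -D m 1) {m n : ℕ} (hmn : m + n ≤ N) :
    D m n = reduced κ (fun k => D 0 (2 * k)) F G₁ G₃ m n := by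
  have hodd : ∀ k m, m + 2 * k + 1 ≤ N → D m (2 * k + 1) = reduceOdd κ F G₃ m k := by
    intro k
    induction k with
    | zero => intro m hm; simp [reduceOdd, hG₃ m (by omega)]
    | succ k ih =>
      intro m hm
      rw [reduceOdd, ← ih (m + 2) (by omega), ← ih m (by omega)]
      linear_combination (hF m (2 * k + 1) (by omega)).symm
  have heven : ∀ m k, m + 2 * k ≤ N →
      D m (2 * k) = reduceEven κ (fun k => D 0 (2 * k)) F G₁ m k := by
    intro m
    induction m using Nat.strong_induction_on with
    | _ m ih =>
      intro k hmk
      match m, ih with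
      | 0, _ => rfl
      | 1, _ => rw [reduceEven]; linear_combination hG₁ (2 * k) (by omega)
      | m + 2, ih =>
        rw [reduceEven, ← ih m (by omega) (k + 1) (by omega), ← ih m (by omega) k (by omega)]
        linear_combination (hF m (2 * k) (by omega)).symm
  obtain ⟨k, rfl | rfl⟩ := Nat.even_or_odd' n
  · simpa [reduced] using heven m k hmn
  · have hmod : (2 * k + 1) % 2 ≠ 0 := by omega
    have hdiv : (2 * k + 1) / 2 = k := by omega
    simpa [reduced, hmod, hdiv] using hodd k m (by omega)

theorem bivariateTaylor_congr {N : ℕ} {D D' : ℕ → ℕ → ℂ} (h : ∀ m n, m + n < N → D m n = D' m n)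
    (a b : ℝ) : bivariateTaylor N D a b = bivariateTaylor N D' a b := by
  refine Finset.sum_congr rfl fun n hn => congrArg _ (Finset.sum_congr rfl fun m hm => ?_)
  rw [h m n (by simp at hn hm; omega)]

theorem stencil_bivariateTaylor_reduced (κ h : ℝ) (B : ℕ → ℂ) (F : ℕ → ℕ → ℂ)
    (G₁ G₃ : ℕ → ℂ) :
    ∑ k ∈ Finset.range 2, ∑ ℓ ∈ Finset.range 2,
        cor1Coef (κ * h) k ℓ * bivariateTaylor 8 (reduced κ B F G₁ G₃) (k * h) (ℓ * h)
      = h * (∑ p ∈ Lam 6, F p.1 p.2 * Jf κ p.1 p.2 h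
          + ∑ n ∈ Finset.range 8, G₁ n * Jg1 κ n h + ∑ n ∈ Finset.range 8, G₃ n * Jg3 κ n h)
        + (h : ℂ) ^ 7 * ∑ j ∈ Finset.range 4,
            (κ : ℂ) ^ (7 - 2 * j) * horner (remCoeffs j) (κ * h) * B j := by
  have hLam : Lam 6 = (Finset.range 7 ×ˢ Finset.range 7).filter (fun p => p.1 + p.2 ≤ 6) := rfl
  rw [hLam]
  simp only [bivariateTaylor, reduced, reduceOdd, reduceEven, Finset.sum_filter,
    Finset.sum_product, Finset.sum_range_succ, Finset.sum_range_zero, cor1Coef, cor1C00, cor1C01,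
    cor1C10, cor1C11, Jf, Jg1, Jg3, jFCoeffs, jG1Coeffs, jG3Coeffs, remCoeffs, horner,
    List.foldr, Nat.reduceMod, Nat.reduceDiv, Nat.reduceEqDiff, ↓reduceIte, Complex.real_smul]
  norm_num [Nat.factorial]
  set t : ℂ := κ * h
  -- `I` is an atom for `ring`: the certificate removes the `I ^ 2` created by multiplying the
  -- complex stencil coefficients with the impedance terms `-iκ u^{(0,2j)}`
  linear_combination
      ((-14721/8192 * t ^ 2 + 1089/4096 * t ^ 3 + 43929/163840 * t ^ 4 - 753/16384 * t ^ 5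
          - 479/49152 * t ^ 6 + 51/20480 * t ^ 7 + 623/6553600 * t ^ 8 - 61/917504 * t ^ 9
          + 5141/825753600 * t ^ 10 + 3/9175040 * t ^ 11) * B 0
      + (h : ℂ) ^ 2 * (-1/30 * t ^ 2 + 7/1024 * t ^ 3 + 78001/2949120 * t ^ 4
          - 2989/983040 * t ^ 5 - 1781/1179648 * t ^ 6 + 305/2752512 * t ^ 7
          - 4729/275251200 * t ^ 8 + 137/18350080 * t ^ 9) * B 1
      + (h : ℂ) ^ 4 * (18817/1474560 * t ^ 2 - 503/245760 * t ^ 3 + 42857/176947200 * t ^ 4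
          - 1565/16515072 * t ^ 5 + 617/91750400 * t ^ 6 + 173/55050240 * t ^ 7) * B 2
      + (h : ℂ) ^ 6 * (56671/44236800 * t ^ 2 - 2011/10321920 * t ^ 3 + 15011/825753600 * t ^ 4
          - 101/55050240 * t ^ 5) * B 3) * I_sq

end Stencil

section Consistency

variable (κ : ℝ) {v : ℝ → ℝ → ℂ} {D F : ℕ → ℕ → ℂ} {G₁ G₃ : ℕ → ℂ}

theorem stencil_error_eq
    (hF : ∀ m n, m + n + 2 ≤ 7 → F m n = D (m + 2) n + D m (n + 2) + κ ^ 2 * D m n)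
    (hG₁ : ∀ n, n + 1 ≤ 7 → G₁ n = -D 1 n - I * κ * D 0 n)
    (hG₃ : ∀ m, m + 1 ≤ 7 → G₃ m = -D m 1) {h : ℝ} (hh : h ≠ 0) :
    (h : ℂ)⁻¹ * ∑ k ∈ Finset.range 2, ∑ ℓ ∈ Finset.range 2,
          cor1Coef (κ * h) k ℓ * v (k * h) (ℓ * h)
        - ∑ p ∈ Lam 6, F p.1 p.2 * Jf κ p.1 p.2 h - ∑ n ∈ Finset.range 8, G₁ n * Jg1 κ n h
        - ∑ n ∈ Finset.range 8, G₃ n * Jg3 κ n h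
      = (h : ℂ)⁻¹ * ∑ k ∈ Finset.range 2, ∑ ℓ ∈ Finset.range 2,
          cor1Coef (κ * h) k ℓ * (v (k * h) (ℓ * h) - bivariateTaylor 8 D (k * h) (ℓ * h))
        + (h : ℂ) ^ 6 * ∑ j ∈ Finset.range 4,
            (κ : ℂ) ^ (7 - 2 * j) * horner (remCoeffs j) (κ * h) * D 0 (2 * j) := by
  have hT : ∑ k ∈ Finset.range 2, ∑ ℓ ∈ Finset.range 2,
      cor1Coef (κ * h) k ℓ * bivariateTaylor 8 D (k * h) (ℓ * h)
      = h * (∑ p ∈ Lam 6, F p.1 p.2 * Jf κ p.1 p.2 h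
          + ∑ n ∈ Finset.range 8, G₁ n * Jg1 κ n h + ∑ n ∈ Finset.range 8, G₃ n * Jg3 κ n h)
        + (h : ℂ) ^ 7 * ∑ j ∈ Finset.range 4,
            (κ : ℂ) ^ (7 - 2 * j) * horner (remCoeffs j) (κ * h) * D 0 (2 * j) := by
    rw [← stencil_bivariateTaylor_reduced]
    refine Finset.sum_congr rfl fun k _ => Finset.sum_congr rfl fun ℓ _ => ?_
    rw [bivariateTaylor_congr (N := 8) fun m n hmn => eq_reduced κ hF hG₁ hG₃ (by omega)]
  have hh' : (h : ℂ) ≠ 0 := by exact_mod_cast hh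
  simp only [mul_sub, Finset.sum_sub_distrib]
  rw [hT]
  field_simp
  ring

theorem exists_norm_cor1Coef_le :
    ∃ B, 0 ≤ B ∧ ∀ h ∈ Icc (0 : ℝ) 1, ∀ k ℓ, ‖cor1Coef (κ * h) k ℓ‖ ≤ B := by
  have hcont : Continuous fun h : ℝ => ‖cor1C00 (κ * h)‖ + ‖cor1C01 (κ * h)‖
      + ‖cor1C10 (κ * h)‖ + ‖cor1C11 (κ * h)‖ := by
    simp only [cor1C00, cor1C01, cor1C10, cor1C11]
    fun_prop
  obtain ⟨B, hB⟩ := isCompact_Icc.exists_bound_of_continuousOn hcont.continuousOn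
  refine ⟨max B 0, le_max_right _ _, fun h hh k ℓ => ?_⟩
  have hsum := (le_abs_self _).trans (hB h hh)
  have := le_max_left B 0
  unfold cor1Coef
  split_ifs <;> linarith [norm_nonneg (cor1C00 (κ * h)), norm_nonneg (cor1C01 (κ * h)),
    norm_nonneg (cor1C10 (κ * h)), norm_nonneg (cor1C11 (κ * h))]

theorem norm_stencil_taylor_remainder_le {ρ CT B h : ℝ} (hCT : 0 ≤ CT) (hh : 0 < h) (hhρ : h ≤ ρ)
    (hB : ∀ k ℓ, ‖cor1Coef (κ * h) k ℓ‖ ≤ B)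
    (hv : ∀ a ∈ Icc 0 ρ, ∀ b ∈ Icc 0 ρ, ‖v a b - bivariateTaylor 8 D a b‖ ≤ CT * max a b ^ 8) :
    ‖∑ k ∈ Finset.range 2, ∑ ℓ ∈ Finset.range 2, cor1Coef (κ * h) k ℓ
      * (v (k * h) (ℓ * h) - bivariateTaylor 8 D (k * h) (ℓ * h))‖ ≤ 4 * (B * (CT * h ^ 8)) := by
  have hterm : ∀ k < 2, ∀ ℓ < 2, ‖cor1Coef (κ * h) k ℓ
      * (v (k * h) (ℓ * h) - bivariateTaylor 8 D (k * h) (ℓ * h))‖ ≤ B * (CT * h ^ 8) := by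
    intro k hk ℓ hℓ
    have hkh : (k : ℝ) * h ≤ h :=
      mul_le_of_le_one_left hh.le (by exact_mod_cast Nat.le_of_lt_succ hk)
    have hℓh : (ℓ : ℝ) * h ≤ h :=
      mul_le_of_le_one_left hh.le (by exact_mod_cast Nat.le_of_lt_succ hℓ)
    rw [norm_mul]
    refine mul_le_mul (hB k ℓ) ((hv _ ⟨by positivity, hkh.trans hhρ⟩ _
      ⟨by positivity, hℓh.trans hhρ⟩).trans ?_) (norm_nonneg _) ((norm_nonneg _).trans (hB 0 0))
    gcongr
    exact max_le hkh hℓh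
  calc _ ≤ ∑ k ∈ Finset.range 2, ∑ ℓ ∈ Finset.range 2, B * (CT * h ^ 8) :=
        (norm_sum_le _ _).trans (Finset.sum_le_sum fun k hk => (norm_sum_le _ _).trans
          (Finset.sum_le_sum fun ℓ hℓ => hterm k (by simpa using hk) ℓ (by simpa using hℓ)))
    _ = 4 * (B * (CT * h ^ 8)) := by
        simp only [Finset.sum_const, Finset.card_range, nsmul_eq_mul]
        push_cast
        ring

theorem stencil_consistency {ρ CT : ℝ} (hρ : 0 < ρ) (hCT : 0 ≤ CT)
    (hF : ∀ m n, m + n + 2 ≤ 7 → F m n = D (m + 2) n + D m (n + 2) + κ ^ 2 * D m n)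
    (hG₁ : ∀ n, n + 1 ≤ 7 → G₁ n = -D 1 n - I * κ * D 0 n)
    (hG₃ : ∀ m, m + 1 ≤ 7 → G₃ m = -D m 1)
    (hv : ∀ a ∈ Icc 0 ρ, ∀ b ∈ Icc 0 ρ, ‖v a b - bivariateTaylor 8 D a b‖ ≤ CT * max a b ^ 8) :
    ∃ C₀ δ : ℝ, 0 < C₀ ∧ 0 < δ ∧ ∀ h : ℝ, 0 < h → h < δ →
      ‖(h : ℂ)⁻¹ * ∑ k ∈ Finset.range 2, ∑ ℓ ∈ Finset.range 2,
            cor1Coef (κ * h) k ℓ * v (k * h) (ℓ * h)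
          - ∑ p ∈ Lam 6, F p.1 p.2 * Jf κ p.1 p.2 h - ∑ n ∈ Finset.range 8, G₁ n * Jg1 κ n h
          - ∑ n ∈ Finset.range 8, G₃ n * Jg3 κ n h‖ ≤ C₀ * h ^ 6 := by
  obtain ⟨B, hB0, hB⟩ := exists_norm_cor1Coef_le κ
  obtain ⟨CR, hCR⟩ := isCompact_Icc.exists_bound_of_continuousOn (s := Icc (0 : ℝ) 1)
    (f := fun h : ℝ => ∑ j ∈ Finset.range 4,
      (κ : ℂ) ^ (7 - 2 * j) * horner (remCoeffs j) (κ * h) * D 0 (2 * j)) (by fun_prop)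
  refine ⟨4 * B * CT + max CR 0 + 1, min ρ 1, by positivity, by positivity, fun h hh0 hhδ => ?_⟩
  have hh1 : h ≤ 1 := hhδ.le.trans (min_le_right _ _)
  have hhρ : h ≤ ρ := hhδ.le.trans (min_le_left _ _)
  have hsum := norm_stencil_taylor_remainder_le κ hCT hh0 hhρ (hB h ⟨hh0.le, hh1⟩) hv
  have h76 : h ^ 7 ≤ h ^ 6 := pow_le_pow_of_le_one hh0.le hh1 (by norm_num)
  rw [stencil_error_eq κ hF hG₁ hG₃ hh0.ne']
  calc _ ≤ h⁻¹ * (4 * (B * (CT * h ^ 8))) + h ^ 6 * max CR 0 := by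
        refine (norm_add_le _ _).trans ?_
        rw [norm_mul, norm_mul, norm_inv, norm_pow, Complex.norm_real, Real.norm_of_nonneg hh0.le]
        gcongr
        exact (hCR h ⟨hh0.le, hh1⟩).trans (le_max_left _ _)
    _ = 4 * B * CT * h ^ 7 + max CR 0 * h ^ 6 := by field_simp
    _ ≤ (4 * B * CT + max CR 0 + 1) * h ^ 6 := by
        nlinarith [mul_le_mul_of_nonneg_left h76 (by positivity : 0 ≤ 4 * B * CT),
          pow_nonneg hh0.le 6]

end Consistency

theorem statement12_general (κ : ℝ) :
    ∃ (J : ℕ → ℕ → ℝ → ℂ) (Jg1 Jg3 : ℕ → ℝ → ℂ),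
      ∀ (l₁ l₃ : ℝ) (U : Set (ℝ × ℝ)), IsOpen U → (l₁, l₃) ∈ U →
      ∀ u : ℝ × ℝ → ℂ, ContDiffOn ℝ 8 u U →
      ∀ (V : Set ℝ), IsOpen V → l₃ ∈ V →
      ∀ (W : Set ℝ), IsOpen W → l₁ ∈ W →
      ∀ g₁ g₃ : ℝ → ℂ, ContDiffOn ℝ 7 g₁ V → ContDiffOn ℝ 7 g₃ W →
      (∀ y ∈ V, -(pd u 1 0 l₁ y) - I * (κ : ℂ) * u (l₁, y) = g₁ y) →
      (∀ x ∈ W, -(pd u 0 1 x l₃) = g₃ x) →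
      ∃ C₀ δ : ℝ, 0 < C₀ ∧ 0 < δ ∧ ∀ h : ℝ, 0 < h → h < δ →
        norm
          ((h : ℂ)⁻¹ *
              ∑ k ∈ Finset.range 2, ∑ ℓ ∈ Finset.range 2,
                cor1Coef (κ * h) k ℓ * u (l₁ + (k : ℝ) * h, l₃ + (ℓ : ℝ) * h)
            - ∑ p ∈ Lam 6, pd (helm κ u) p.1 p.2 l₁ l₃ * J p.1 p.2 h
            - ∑ n ∈ Finset.range 8, iteratedDeriv n g₁ l₃ * Jg1 n h
            - ∑ n ∈ Finset.range 8, iteratedDeriv n g₃ l₁ * Jg3 n h)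
          ≤ C₀ * h ^ 6 := by
  refine ⟨Jf κ, Jg1 κ, Jg3 κ, ?_⟩
  intro l₁ l₃ U hU hp u hu V hV hl₃ W hW hl₁ g₁ g₃ _ _ hbc₁ hbc₃
  have hu8 : ContDiffOn ℝ (8 : ℕ) u U := by exact_mod_cast hu
  obtain ⟨ρ, hρ, hK⟩ := hU.exists_Icc_prod_Icc_subset hp
  obtain ⟨CT, hCT, hT⟩ := norm_sub_bivariateTaylor_le (N := 7) hU (by exact_mod_cast hu) hρ hK
  exact stencil_consistency κ (v := fun a b => u (l₁ + a, l₃ + b))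
    (F := fun m n => pd (helm κ u) m n l₁ l₃) (G₁ := fun n => iteratedDeriv n g₁ l₃)
    (G₃ := fun n => iteratedDeriv n g₃ l₁) hρ hCT
    (fun m n _ => pd_helm κ hU hu8 (by omega) hp)
    (fun n _ => iteratedDeriv_eq_of_impedance hU hu8 hp hV hl₃ hbc₁ (by omega))
    (fun m _ => iteratedDeriv_eq_of_neumann hW hl₁ hbc₃ m) hT

/-- Theorem 2.4: the 4-point corner stencil with the stated
coefficients achieves sixth consistency order at a lower-left corner `(l₁,l₃)`
with an impedance condition `-∂ₓu - iκu = g₁` on the left edge and a Neumann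
condition `-∂_yu = g₃` on the bottom edge. -/
theorem statement12 (κ : ℝ) (hκ : 0 ≤ κ) :
    ∃ (J : ℕ → ℕ → ℝ → ℂ) (Jg1 Jg3 : ℕ → ℝ → ℂ),
      ∀ (l₁ l₃ : ℝ) (U : Set (ℝ × ℝ)), IsOpen U → (l₁, l₃) ∈ U →
      ∀ u : ℝ × ℝ → ℂ, ContDiffOn ℝ 8 u U →
      ∀ (V : Set ℝ), IsOpen V → l₃ ∈ V →
      ∀ (W : Set ℝ), IsOpen W → l₁ ∈ W →
      ∀ g₁ g₃ : ℝ → ℂ, ContDiffOn ℝ 7 g₁ V → ContDiffOn ℝ 7 g₃ W →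
      (∀ y ∈ V, -(pd u 1 0 l₁ y) - I * (κ : ℂ) * u (l₁, y) = g₁ y) →
      (∀ x ∈ W, -(pd u 0 1 x l₃) = g₃ x) →
      ∃ C₀ δ : ℝ, 0 < C₀ ∧ 0 < δ ∧ ∀ h : ℝ, 0 < h → h < δ →
        norm
          ((h : ℂ)⁻¹ *
              ∑ k ∈ Finset.range 2, ∑ ℓ ∈ Finset.range 2,
                cor1Coef (κ * h) k ℓ * u (l₁ + (k : ℝ) * h, l₃ + (ℓ : ℝ) * h)
            - ∑ p ∈ Lam 6, pd (helm κ u) p.1 p.2 l₁ l₃ * J p.1 p.2 h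
            - ∑ n ∈ Finset.range 8, iteratedDeriv n g₁ l₃ * Jg1 n h
            - ∑ n ∈ Finset.range 8, iteratedDeriv n g₃ l₁ * Jg3 n h)
          ≤ C₀ * h ^ 6 :=
  statement12_general κ
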